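/- arXiv:1208.0457 — 5 statements merged into one kernel-verified Lean document; each statement's English description precedes it below -/
import Mathlib

section
/- Let F ∈ ℚ[t] be monic of degree d with nonzero constant term, A ∈ ℚ[t] coprime to F, and γ ∈ ℤ. Then there exists a unique Laurent polynomial B ∈ ℚ[t,t⁻¹] supported on exponents in the interval [γ, γ+d−1] such that A·B ≡ 1 modulo F. -/
/-!
Since `F(0) ≠ 0`, the variable `t` is coprime to `F`, hence invertible modulo `F`. So every Laurent
polynomial `f` is congruent modulo `F` to a polynomial, and then to `T^γ · r` with `deg r < d`: take
for `r` the remainder modulo `F` of a polynomial congruent to `T^(-γ) f`. The `T^γ · r` with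
`deg r < d` are exactly the Laurent polynomials supported in `[γ, γ+d-1]`, and applying this to an
inverse of `A` modulo `F` gives existence. Two solutions differ by `T^γ · r` with `deg r < d` and
`F ∣ A · r` (in `ℚ[t]`, again because `t` is coprime to `F`), so `F ∣ r` and `r = 0`.
-/

open Polynomial LaurentPolynomial

lemma Polynomial.isCoprime_X_iff_coeff_zero_ne_zero {K : Type*} [Field K] {F : K[X]} :
    IsCoprime X F ↔ F.coeff 0 ≠ 0 :=
  irreducible_X.coprime_iff_not_dvd.trans X_dvd_iff.not

namespace LaurentPolynomial

section Semiring

variable {R : Type*} [Semiring R]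

lemma coeff_mul_T (f : R[T;T⁻¹]) (n k : ℤ) : (f * T n).coeff k = f.coeff (k - n) := by
  simpa [sub_eq_add_neg] using AddMonoidAlgebra.coeff_mul_single_apply f (1 : R) n k

lemma coeff_toLaurent_natCast (p : R[X]) (n : ℕ) : (toLaurent p).coeff n = p.coeff n :=
  Finsupp.mapDomain_apply Nat.cast_injective _ _

lemma coeff_toLaurent_of_neg (p : R[X]) {k : ℤ} (hk : k < 0) : (toLaurent p).coeff k = 0 :=
  Finsupp.mapDomain_of_notMem_range _ _ (by rintro ⟨n, rfl⟩; simp only [AddMonoidHom.coe_coe, eq_natCast] at hk; omega)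

lemma support_coeff_subset_Icc_iff (f : R[T;T⁻¹]) (γ : ℤ) (d : ℕ) :
    (f.coeff.support : Set ℤ) ⊆ Set.Icc γ (γ + d - 1) ↔
      ∃ p : R[X], p.degree < d ∧ f = toLaurent p * T γ := by
  constructor
  · intro hf
    have hcoeff : ∀ k, (k < γ ∨ γ + d - 1 < k) → f.coeff k = 0 := fun k hk ↦
      Finsupp.notMem_support_iff.1 fun hk' ↦ by have := hf hk'; simp only [Set.mem_Icc] at this; omega
    have hpoly : toLaurent (trunc (f * T (-γ))) = f * T (-γ) := by
      ext k
      rcases le_or_gt 0 k with hk | hk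
      · lift k to ℕ using hk
        exact coeff_toLaurent_natCast _ k
      · rw [coeff_toLaurent_of_neg _ hk, coeff_mul_T, hcoeff _ (by omega)]
    refine ⟨trunc (f * T (-γ)), (degree_lt_iff_coeff_zero _ _).2 fun m hm ↦ ?_, ?_⟩
    · change (f * T (-γ)).coeff m = 0
      rw [coeff_mul_T, hcoeff _ (by omega)]
    · rw [hpoly, mul_T_assoc, neg_add_cancel, T_zero, mul_one]
  · rintro ⟨p, hp, rfl⟩ k hk
    rw [Finset.mem_coe, Finsupp.mem_support_iff, coeff_mul_T] at hk
    obtain ⟨n, hn⟩ : ∃ n : ℕ, k - γ = n := Int.eq_ofNat_of_zero_le <| by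
      by_contra! h; exact hk (coeff_toLaurent_of_neg _ h)
    rw [hn, coeff_toLaurent_natCast] at hk
    have : n < d := by
      by_contra! h; exact hk ((degree_lt_iff_coeff_zero _ _).1 hp n h)
    constructor <;> omega

end Semiring

lemma dvd_of_toLaurent_dvd_toLaurent {R : Type*} [CommSemiring R] {F q : R[X]} (hX : IsCoprime X F)
    (h : toLaurent F ∣ toLaurent q) : F ∣ q := by
  obtain ⟨L, hL⟩ := h
  obtain ⟨n, L', hL'⟩ := L.exists_T_pow
  have : q * X ^ n = F * L' := toLaurent_injective <| by
    rw [map_mul, map_mul, toLaurent_X_pow, hL', hL, mul_assoc]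
  exact hX.pow_left.symm.dvd_of_dvd_mul_right ⟨L', this⟩

lemma exists_toLaurent_dvd_sub {R : Type*} [CommRing R] {F : R[X]} (hX : IsCoprime X F)
    (f : R[T;T⁻¹]) : ∃ q : R[X], toLaurent F ∣ f - toLaurent q := by
  obtain ⟨n, g, hg⟩ := f.exists_T_pow
  obtain ⟨u, v, huv⟩ := hX.pow_left (m := n)
  have huv' : toLaurent u * T n + toLaurent v * toLaurent F = 1 := by
    simpa only [map_add, map_mul, map_one, toLaurent_X_pow] using congrArg toLaurent huv
  refine ⟨g * u, f * toLaurent v, ?_⟩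
  rw [map_mul, hg]
  linear_combination (-f) * huv'

section Field

variable {K : Type*} [Field K]

lemma exists_degree_lt_toLaurent_dvd_sub {F : K[X]} (hF : F ≠ 0) (hX : IsCoprime X F)
    (f : K[T;T⁻¹]) (γ : ℤ) :
    ∃ p : K[X], p.degree < F.degree ∧ toLaurent F ∣ f - toLaurent p * T γ := by
  obtain ⟨q, hq⟩ := exists_toLaurent_dvd_sub hX (f * T (-γ))
  have hmod : toLaurent F ∣ toLaurent q - toLaurent (q % F) := by
    rw [← map_sub, EuclideanDomain.mod_eq_sub_mul_div, sub_sub_cancel]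
    exact map_dvd _ (dvd_mul_right F _)
  refine ⟨q % F, degree_mod_lt q hF, ?_⟩
  have := (dvd_add hq hmod).mul_right (T γ)
  rwa [sub_add_sub_cancel, sub_mul, mul_T_assoc, neg_add_cancel, T_zero, mul_one] at this

lemma eq_of_degree_lt_of_toLaurent_dvd_sub {F p p' : K[X]} (hX : IsCoprime X F)
    (hp : p.degree < F.degree) (hp' : p'.degree < F.degree) (γ : ℤ)
    (h : toLaurent F ∣ toLaurent p * T γ - toLaurent p' * T γ) : p = p' := by
  rw [← sub_mul, ← map_sub, (isUnit_T γ).dvd_mul_right] at h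
  refine sub_eq_zero.1 <| eq_zero_of_dvd_of_degree_lt (dvd_of_toLaurent_dvd_toLaurent hX h) ?_
  exact (degree_sub_le p p').trans_lt (max_lt hp hp')

end Field

end LaurentPolynomial

theorem invMod_exists_unique_general (F A : Polynomial ℚ) (d : ℕ)
    (hdeg : F.natDegree = d) (h0 : F.coeff 0 ≠ 0)
    (hcop : IsCoprime A F) (γ : ℤ) :
    ∃! B : LaurentPolynomial ℚ,
      (B.coeff.support : Set ℤ) ⊆ Set.Icc γ (γ + d - 1) ∧
      Polynomial.toLaurent F ∣ (Polynomial.toLaurent A * B - 1) := by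
  have hF : F ≠ 0 := fun h ↦ h0 (by simp [h])
  have hX : IsCoprime X F := isCoprime_X_iff_coeff_zero_ne_zero.2 h0
  have hdegF : F.degree = d := by rw [degree_eq_natDegree hF, hdeg]
  have hcopL : IsCoprime (toLaurent A) (toLaurent F) := hcop.map toLaurent
  obtain ⟨u, v, huv⟩ := id hcopL
  have hu : toLaurent F ∣ toLaurent A * u - 1 := ⟨-v, by linear_combination huv⟩
  obtain ⟨p, hp, hpu⟩ := exists_degree_lt_toLaurent_dvd_sub hF hX u γ
  have hpA : toLaurent F ∣ toLaurent A * (toLaurent p * T γ) - 1 := by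
    convert dvd_sub hu (hpu.mul_left (toLaurent A)) using 1; ring
  refine ⟨toLaurent p * T γ, ⟨(support_coeff_subset_Icc_iff _ _ _).2 ⟨p, hdegF ▸ hp, rfl⟩, hpA⟩, ?_⟩
  rintro B ⟨hB, hBA⟩
  obtain ⟨p', hp', rfl⟩ := (support_coeff_subset_Icc_iff _ _ _).1 hB
  have hdiff : toLaurent F ∣ toLaurent A * (toLaurent p' * T γ - toLaurent p * T γ) := by
    convert dvd_sub hBA hpA using 1; ring
  rw [eq_of_degree_lt_of_toLaurent_dvd_sub hX (hdegF ▸ hp') hp γ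
    (hcopL.symm.dvd_of_dvd_mul_left hdiff)]

/-- Let `F ∈ ℚ[t]` be monic of degree `d` with nonzero constant term, `A`
coprime to `F`, and `γ ∈ ℤ`. Then there is a unique Laurent polynomial `B`
supported on exponents in `[γ, γ+d-1]` with `A·B ≡ 1 (mod F)`. -/
theorem invMod_exists_unique (F A : Polynomial ℚ) (d : ℕ)
    (hdeg : F.natDegree = d) (hmonic : F.Monic) (h0 : F.coeff 0 ≠ 0)
    (hcop : IsCoprime A F) (γ : ℤ) :
    ∃! B : LaurentPolynomial ℚ,
      (B.coeff.support : Set ℤ) ⊆ Set.Icc γ (γ + d - 1) ∧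
      Polynomial.toLaurent F ∣ (Polynomial.toLaurent A * B - 1) :=
  invMod_exists_unique_general F A d hdeg h0 hcop γ
end

section
/- Let 0 < a < r be coprime integers and b the inverse of a modulo r with 0 < b < r. Then the inverse of (1−t^a)/(1−t) modulo (1−t^r)/(1−t) is given by ∑_{i=0}^{b−1} t^{a i}, i.e. ((1−t^a)/(1−t)) · (∑_{i=0}^{b−1} t^{a i}) ≡ 1 modulo (1−t^r)/(1−t). -/
open Finset

section GeomSum

variable {R : Type*}

theorem geom_sum_mul_geom_sum_pow [CommSemiring R] (x : R) (m n : ℕ) :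
    (∑ i ∈ range m, x ^ i) * ∑ j ∈ range n, x ^ (m * j) = ∑ i ∈ range (m * n), x ^ i := by
  induction n with
  | zero => simp
  | succ n ih =>
    rw [sum_range_succ, mul_add, ih, Nat.mul_succ, sum_range_add, sum_mul]
    simp only [pow_add, mul_comm]

theorem geom_sum_dvd_geom_sum_of_dvd [CommSemiring R] (x : R) {m n : ℕ} (h : m ∣ n) :
    ∑ i ∈ range m, x ^ i ∣ ∑ i ∈ range n, x ^ i := by
  obtain ⟨k, rfl⟩ := h
  exact ⟨_, (geom_sum_mul_geom_sum_pow x m k).symm⟩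

theorem geom_sum_dvd_geom_sum_sub_one_of_modEq [CommRing R] (x : R) {m n : ℕ}
    (h : n ≡ 1 [MOD m]) : ∑ i ∈ range m, x ^ i ∣ ∑ i ∈ range n, x ^ i - 1 := by
  rcases eq_or_ne m 1 with rfl | hm
  · simp
  have hn : m * (n / m) + 1 = n := by
    rw [← Nat.one_mod_eq_one.mpr hm, ← h]
    exact Nat.div_add_mod n m
  rw [← hn, geom_sum_succ, add_sub_cancel_right]
  exact dvd_mul_of_dvd_right (geom_sum_dvd_geom_sum_of_dvd x (dvd_mul_right m _)) x

end GeomSum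

open Polynomial in
theorem one_dim_ice_cream_inverse_general (a r b : ℕ)
    (hab : a * b ≡ 1 [MOD r]) :
    (∑ i ∈ Finset.range r, (X : Polynomial ℚ) ^ i) ∣
      ((∑ i ∈ Finset.range a, (X : Polynomial ℚ) ^ i) *
        (∑ i ∈ Finset.range b, X ^ (a * i)) - 1) := by
  rw [geom_sum_mul_geom_sum_pow]
  exact geom_sum_dvd_geom_sum_sub_one_of_modEq X hab

open Polynomial in
/-- Let `0 < a < r` be coprime and `b` the inverse of `a` mod `r` with `0 < b < r`.
Then `((1−t^a)/(1−t)) · (∑_{i<b} t^{a i}) ≡ 1` modulo `(1−t^r)/(1−t)`. -/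
theorem one_dim_ice_cream_inverse (a r b : ℕ) (ha : 0 < a) (har : a < r)
    (hcop : Nat.Coprime a r) (hb : 0 < b) (hbr : b < r)
    (hab : a * b ≡ 1 [MOD r]) :
    (∑ i ∈ Finset.range r, (X : Polynomial ℚ) ^ i) ∣
      ((∑ i ∈ Finset.range a, (X : Polynomial ℚ) ^ i) *
        (∑ i ∈ Finset.range b, X ^ (a * i)) - 1) :=
  one_dim_ice_cream_inverse_general a r b hab
end

section
/- With σᵢ the generalized Dedekind sums of type (1/r)(a₁,…,aₙ), suppose β is a common divisor of r and of some aⱼ. Then for every integer d, the sum ∑ σᵢ over all i in {0,…,r−1} with i ≡ d (mod β) equals zero. -/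
/-!
Exchanging the two summations, each term of `σᵢ` contributes, for a fixed `k`, a multiple
of `∑ (ζᵏ)ⁱ` over `i < r` with `i ≡ d (mod β)`. Writing `i = d % β + β t` this is `(ζᵏ)ᵈ` times
a geometric sum in `ζ^(kβ)` over a full period `t < r / β`, which vanishes because
`ζ^(kβ) ≠ 1`: otherwise `ζ^(k aⱼ) = 1` for the `aⱼ` divisible by `β`, and `k` is excluded.
-/

open Finset

theorem geom_sum_eq_zero_of_pow_eq_one {R : Type*} [Ring R] [NoZeroDivisors R] {x : R}
    {n : ℕ} (hx : x ≠ 1) (hxn : x ^ n = 1) : ∑ i ∈ range n, x ^ i = 0 := by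
  have h := geom_sum_mul x n
  rw [hxn, sub_self] at h
  exact (mul_eq_zero.mp h).resolve_right (sub_ne_zero.mpr hx)

theorem Nat.range_filter_mod_eq_image {r β : ℕ} (hβ : 0 < β) (hβr : β ∣ r) (c : ℕ) :
    (range r).filter (fun i => i % β = c % β) =
      (range (r / β)).image (fun t => c % β + β * t) := by
  ext i
  simp only [mem_filter, mem_range, mem_image]
  constructor
  · rintro ⟨hir, hic⟩
    exact ⟨i / β, Nat.div_lt_div_of_lt_of_dvd hβr hir, hic ▸ Nat.mod_add_div i β⟩
  · rintro ⟨t, ht, rfl⟩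
    refine ⟨?_, by simp⟩
    have hc : c % β < β := Nat.mod_lt c hβ
    have ht' : β * (t + 1) ≤ β * (r / β) := Nat.mul_le_mul_left β ht
    rw [Nat.mul_div_cancel' hβr] at ht'
    linarith

theorem sum_pow_filter_mod_eq_zero {R : Type*} [CommRing R] [NoZeroDivisors R] {ω : R}
    {r β : ℕ} (hω : ω ^ r = 1) (hβr : β ∣ r) (hωβ : ω ^ β ≠ 1) (c : ℕ) :
    ∑ i ∈ (range r).filter (fun i => i % β = c % β), ω ^ i = 0 := by
  have hβ : 0 < β := Nat.pos_of_ne_zero fun h => hωβ (by rw [h, pow_zero])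
  have hperiod : (ω ^ β) ^ (r / β) = 1 := by rw [← pow_mul, Nat.mul_div_cancel' hβr, hω]
  have hinj : Set.InjOn (fun t => c % β + β * t) (range (r / β)) := fun x _ y _ h =>
    Nat.eq_of_mul_eq_mul_left hβ (Nat.add_left_cancel h)
  rw [Nat.range_filter_mod_eq_image hβ hβr, sum_image hinj]
  simp only [pow_add, pow_mul]
  rw [← mul_sum, geom_sum_eq_zero_of_pow_eq_one hωβ hperiod, mul_zero]

theorem Complex.exp_two_pi_I_div_pow_eq_one (r : ℕ) :
    Complex.exp (2 * Real.pi * Complex.I / r) ^ r = 1 := by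
  rcases eq_or_ne r 0 with rfl | hr
  · exact pow_zero _
  · exact (Complex.isPrimitiveRoot_exp r hr).pow_eq_one

open Finset in
theorem dedekind_sums_coset_sum_zero_general (r n : ℕ)
    (a : Fin n → ℕ)
    (ζ : ℂ) (hζ : ζ = Complex.exp (2 * Real.pi * Complex.I / r))
    (σ : ℕ → ℂ)
    (hσ : ∀ i, σ i = (1 / (r : ℂ)) *
      ∑ k ∈ (Finset.range r).filter (fun k => ∀ j, ζ ^ (k * a j) ≠ 1),
        ζ ^ (k * i) / ∏ j, (1 - ζ ^ (k * a j)))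
    (β : ℕ) (hβr : β ∣ r) (hβa : ∃ j, β ∣ a j) :
    ∀ d : ℕ, ∑ i ∈ (Finset.range r).filter (fun i => i % β = d % β), σ i = 0 := by
  intro d
  obtain ⟨j₀, m, hm⟩ := hβa
  have hζr : ζ ^ r = 1 := hζ ▸ Complex.exp_two_pi_I_div_pow_eq_one r
  simp_rw [hσ, ← mul_sum]
  rw [sum_comm]
  refine mul_eq_zero_of_right _ (sum_eq_zero fun k hk => ?_)
  have hkβ : (ζ ^ k) ^ β ≠ 1 := fun h =>
    (mem_filter.mp hk).2 j₀ (by rw [hm, ← mul_assoc, pow_mul, pow_mul, h, one_pow])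
  have hkr : (ζ ^ k) ^ r = 1 := by rw [← pow_mul, mul_comm, pow_mul, hζr, one_pow]
  simp_rw [← sum_div, pow_mul]
  rw [sum_pow_filter_mod_eq_zero hkr hβr hkβ d, zero_div]

open Finset in
/-- Generalized Dedekind sums of type `(1/r)(a₁,…,aₙ)`: if `β` divides `r` and
some `aⱼ`, then for every `d` the sum of the `σᵢ` over `i ≡ d (mod β)` vanishes. -/
theorem dedekind_sums_coset_sum_zero (r n : ℕ) (hr : 0 < r)
    (a : Fin n → ℕ) (ha : ∀ j, 0 < a j)
    (ζ : ℂ) (hζ : ζ = Complex.exp (2 * Real.pi * Complex.I / r))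
    (σ : ℕ → ℂ)
    (hσ : ∀ i, σ i = (1 / (r : ℂ)) *
      ∑ k ∈ (Finset.range r).filter (fun k => ∀ j, ζ ^ (k * a j) ≠ 1),
        ζ ^ (k * i) / ∏ j, (1 - ζ ^ (k * a j)))
    (β : ℕ) (hβr : β ∣ r) (hβa : ∃ j, β ∣ a j) :
    ∀ d : ℕ, ∑ i ∈ (Finset.range r).filter (fun i => i % β = d % β), σ i = 0 :=
  dedekind_sums_coset_sum_zero_general r n a ζ hζ σ hσ β hβr hβa
end

section
/- Let r ≥ 2 and a₁,…,aₙ be positive integers, A = ∏ⱼ(1−t^{aⱼ}), h = gcd(1−t^r, A) in ℚ[t], and F = (1−t^r)/h. Let Δ(t) = ∑_{i=1}^{r} σ_{r−i} t^i be the Dedekind sum polynomial, where σᵢ are the generalized Dedekind sums of type (1/r)(a₁,…,aₙ). Then A(t)·Δ(t) ≡ 1 modulo F in ℚ[t]. -/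
/-!
Every root of `F` is an `r`-th root of unity `ζ ^ k`. Since `1 - X ^ r` is squarefree, `h` already
contains every root it shares with `A`, so `A (ζ ^ k) ≠ 0`, i.e. `k` is one of the indices of the
Dedekind sums. For such `k`, evaluating `Δ` at `ζ ^ k` is a discrete Fourier inversion and yields
`1 / A (ζ ^ k)`. Hence `A * Δ - 1` vanishes at every root of the separable polynomial `F`.
-/

open Polynomial Finset

theorem sum_Icc_pow_eq_zero_of_pow_eq_one {K : Type*} [Field K] {r : ℕ} {w : K}
    (hw : w ^ r = 1) (hw1 : w ≠ 1) : ∑ i ∈ Icc 1 r, w ^ i = 0 := by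
  rw [← Ico_add_one_right_eq_Icc, sum_Ico_eq_sum_range, Nat.add_sub_cancel]
  simp only [pow_add, pow_one, ← mul_sum, geom_sum_eq hw1, hw, sub_self, zero_div, mul_zero]

/-- Fourier inversion on the `r`-th roots of unity. -/
theorem IsPrimitiveRoot.sum_Icc_dft_mul_pow {K : Type*} [Field K] {ζ : K} {r : ℕ}
    (hζ : IsPrimitiveRoot ζ r) {S : Finset ℕ} (hS : S ⊆ range r) (d : ℕ → K) {k : ℕ}
    (hk : k ∈ S) :
    ∑ i ∈ Icc 1 r, 1 / (r : K) * (∑ m ∈ S, ζ ^ (m * (r - i)) / d m) * (ζ ^ k) ^ i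
      = (d k)⁻¹ := by
  have hkr : k < r := mem_range.mp (hS hk)
  have : NeZero r := ⟨by omega⟩
  have hr : (r : K) ≠ 0 := hζ.neZero'.out
  have hζ0 : ζ ≠ 0 := hζ.ne_zero (by omega)
  have hterm : ∀ m, ∀ i ∈ Icc 1 r, ζ ^ (m * (r - i)) * (ζ ^ k) ^ i = (ζ ^ k / ζ ^ m) ^ i := by
    intro m i hi
    rw [pow_mul, pow_sub₀ _ (pow_ne_zero _ hζ0) (mem_Icc.mp hi).2, pow_right_comm, hζ.pow_eq_one,
      one_pow, div_pow]
    ring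
  have hgeom : ∀ m ∈ S, ∑ i ∈ Icc 1 r, (ζ ^ k / ζ ^ m) ^ i = if m = k then (r : K) else 0 := by
    intro m hm
    split_ifs with hmk
    · simp [hmk, div_self (pow_ne_zero _ hζ0)]
    refine sum_Icc_pow_eq_zero_of_pow_eq_one ?_ fun h => hmk ?_
    · rw [div_pow, pow_right_comm, pow_right_comm ζ m, hζ.pow_eq_one, one_pow, one_pow, div_one]
    · exact hζ.pow_inj (mem_range.mp (hS hm)) hkr
        ((div_eq_one_iff_eq (pow_ne_zero _ hζ0)).mp h).symm
  calc ∑ i ∈ Icc 1 r, 1 / (r : K) * (∑ m ∈ S, ζ ^ (m * (r - i)) / d m) * (ζ ^ k) ^ i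
      = ∑ i ∈ Icc 1 r, ∑ m ∈ S, 1 / (r : K) * (ζ ^ k / ζ ^ m) ^ i / d m := by
        refine sum_congr rfl fun i hi => ?_
        rw [mul_sum, sum_mul]
        refine sum_congr rfl fun m _ => ?_
        rw [← hterm m i hi]
        ring
    _ = ∑ m ∈ S, 1 / (r : K) * (∑ i ∈ Icc 1 r, (ζ ^ k / ζ ^ m) ^ i) / d m := by
        rw [sum_comm]
        simp only [mul_sum, sum_div]
    _ = (d k)⁻¹ := by
        rw [sum_congr rfl fun m hm => by rw [hgeom m hm]]
        simp only [mul_ite, mul_zero, ite_div, zero_div, sum_ite_eq', if_pos hk]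
        field_simp

theorem Polynomial.dvd_of_forall_isRoot {K : Type*} [Field K] [IsAlgClosed K] {F Q : K[X]}
    (hF : F.Separable) (hFQ : ∀ x, F.IsRoot x → Q.IsRoot x) : F ∣ Q := by
  rcases eq_or_ne Q 0 with rfl | hQ
  · exact dvd_zero F
  refine (IsAlgClosed.splits F).dvd_of_roots_le_roots hF.ne_zero ?_
  exact (Multiset.le_iff_subset (nodup_roots hF)).2 fun x hx =>
    (mem_roots hQ).2 (hFQ x (isRoot_of_mem_roots hx))

theorem Polynomial.not_isRoot_of_isRoot_div_gcd {K : Type*} [Field K] [DecidableEq K] {P A : K[X]}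
    (hP : Squarefree P) {x : K} (hx : (P / EuclideanDomain.gcd P A).IsRoot x) : ¬ A.IsRoot x := by
  intro hA
  set h := EuclideanDomain.gcd P A
  have hhP : h ∣ P := EuclideanDomain.gcd_dvd_left P A
  have hh0 : h ≠ 0 := fun h0 => hP.ne_zero ((EuclideanDomain.gcd_eq_zero_iff.mp h0).1)
  have hdF : X - C x ∣ P / h := dvd_iff_isRoot.mpr hx
  have hdh : X - C x ∣ h :=
    EuclideanDomain.dvd_gcd (hdF.trans (EuclideanDomain.div_dvd_of_dvd hhP)) (dvd_iff_isRoot.mpr hA)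
  rw [← EuclideanDomain.mul_div_cancel' hh0 hhP] at hP
  exact not_isUnit_X_sub_C x ((squarefree_mul_iff.mp hP).1 hdh hdF)

open Polynomial Finset in
theorem dedekind_polynomial_is_inverse_general (r n : ℕ) (hr : 2 ≤ r)
    (a : Fin n → ℕ)
    (ζ : ℂ) (hζ : ζ = Complex.exp (2 * Real.pi * Complex.I / r))
    (σ : ℕ → ℂ)
    (hσ : ∀ i, σ i = (1 / (r : ℂ)) *
      ∑ k ∈ (Finset.range r).filter (fun k => ∀ j, ζ ^ (k * a j) ≠ 1),
        ζ ^ (k * i) / ∏ j, (1 - ζ ^ (k * a j)))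
    (A h F Δ : Polynomial ℂ)
    (hA : A = ∏ j, (1 - X ^ (a j)))
    (hh : h = EuclideanDomain.gcd (1 - X ^ r) A)
    (hF : F = (1 - X ^ r) / h)
    (hΔ : Δ = ∑ i ∈ Finset.Icc 1 r, C (σ (r - i)) * X ^ i) :
    F ∣ (A * Δ - 1) := by
  have : NeZero r := ⟨by omega⟩
  have hprim : IsPrimitiveRoot ζ r := hζ ▸ Complex.isPrimitiveRoot_exp r (NeZero.ne r)
  have hsep : (1 - X ^ r : ℂ[X]).Separable :=
    (X_pow_sub_one_separable_iff.mpr (NeZero.ne _)).of_dvd ⟨-1, by ring⟩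
  have hFP : F ∣ 1 - X ^ r :=
    hF ▸ EuclideanDomain.div_dvd_of_dvd (hh ▸ EuclideanDomain.gcd_dvd_left _ _)
  have hevalA : ∀ k : ℕ, A.eval (ζ ^ k) = ∏ j, (1 - ζ ^ (k * a j)) := fun k => by
    simp [hA, eval_prod, pow_mul]
  refine dvd_of_forall_isRoot (hsep.of_dvd hFP) fun x hx => ?_
  have hxr : x ^ r = 1 := by
    have hPx : (1 - X ^ r : ℂ[X]).IsRoot x := hx.dvd hFP
    simp only [IsRoot, eval_sub, eval_one, eval_pow, eval_X, sub_eq_zero] at hPx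
    exact hPx.symm
  obtain ⟨k, hkr, rfl⟩ := hprim.eq_pow_of_pow_eq_one hxr
  have hAk : ∏ j, (1 - ζ ^ (k * a j)) ≠ 0 := by
    rw [← hevalA]
    exact not_isRoot_of_isRoot_div_gcd hsep.squarefree (hh ▸ hF ▸ hx)
  have hk : k ∈ (range r).filter (fun k => ∀ j, ζ ^ (k * a j) ≠ 1) :=
    mem_filter.mpr ⟨mem_range.mpr hkr, fun j h1 =>
      hAk (prod_eq_zero (mem_univ j) (by rw [h1, sub_self]))⟩
  have hevalΔ : Δ.eval (ζ ^ k) = (∏ j, (1 - ζ ^ (k * a j)))⁻¹ := by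
    simp only [hΔ, eval_finsetSum, eval_mul, eval_C, eval_pow, eval_X, hσ]
    exact hprim.sum_Icc_dft_mul_pow (filter_subset _ _) _ hk
  rw [IsRoot, eval_sub, eval_mul, eval_one, hevalA, hevalΔ, mul_inv_cancel₀ hAk, sub_self]

open Polynomial Finset in
/-- Buckley's theorem: with `A = ∏ⱼ(1−t^{aⱼ})`, `h = gcd(1−t^r, A)`,
`F = (1−t^r)/h` and the Dedekind sum polynomial `Δ = ∑_{i=1}^r σ_{r−i} tⁱ`,
one has `A·Δ ≡ 1 (mod F)`. -/
theorem dedekind_polynomial_is_inverse (r n : ℕ) (hr : 2 ≤ r)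
    (a : Fin n → ℕ) (ha : ∀ j, 0 < a j)
    (ζ : ℂ) (hζ : ζ = Complex.exp (2 * Real.pi * Complex.I / r))
    (σ : ℕ → ℂ)
    (hσ : ∀ i, σ i = (1 / (r : ℂ)) *
      ∑ k ∈ (Finset.range r).filter (fun k => ∀ j, ζ ^ (k * a j) ≠ 1),
        ζ ^ (k * i) / ∏ j, (1 - ζ ^ (k * a j)))
    (A h F Δ : Polynomial ℂ)
    (hA : A = ∏ j, (1 - X ^ (a j)))
    (hh : h = EuclideanDomain.gcd (1 - X ^ r) A)
    (hF : F = (1 - X ^ r) / h)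
    (hΔ : Δ = ∑ i ∈ Finset.Icc 1 r, C (σ (r - i)) * X ^ i) :
    F ∣ (A * Δ - 1) :=
  dedekind_polynomial_is_inverse_general r n hr a ζ hζ σ hσ A h F Δ hA hh hF hΔ
end

section
/- Let r ≥ 2 and 0 < a < r with gcd(a,r) = 1, and let 0 < b < r satisfy a·b ≡ 1 (mod r). Then the Dedekind sums of the surface type (1/r)(a, r−a) are given by σᵢ = (r²−1)/(12r) − b̄ᵢ(r−b̄ᵢ)/(2r), where b̄ᵢ denotes the least nonnegative residue of b·i modulo r. -/
/-!
For an `r`-th root of unity `x ≠ 1` one has `(1 - x)⁻¹ = -(1/r) ∑_{j<r} j xʲ`. Expanding both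
factors this way turns `r σᵢ` into `r⁻² ∑_{j,l<r} j l ∑_{0<k<r} ζ^{k(i + a j + (r - a) l)}`, and the
inner sum is `r - 1` or `-1` according as `r ∣ i + a (j - l)`, i.e. as `l ≡ j + b i (mod r)`.
What is left is the elementary sum `∑_{j<r} j ((j + b̄ᵢ) mod r)`, computed by splitting `j` at
`r - b̄ᵢ`.
-/

open Finset

section Sums

variable {K : Type*} [Field K] [CharZero K]

theorem sum_range_natCast (n : ℕ) : ∑ j ∈ range n, (j : K) = n * (n - 1) / 2 := by
  induction n with
  | zero => simp
  | succ n ih => rw [sum_range_succ, ih]; push_cast; ring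

theorem sum_range_natCast_sq (n : ℕ) :
    ∑ j ∈ range n, (j : K) ^ 2 = n * (n - 1) * (2 * n - 1) / 6 := by
  induction n with
  | zero => simp
  | succ n ih => rw [sum_range_succ, ih]; push_cast; ring

theorem sum_range_natCast_mul_add_mod {n m : ℕ} (hm : m ≤ n) :
    ∑ j ∈ range n, (j : K) * ((j + m) % n : ℕ)
      = n * (n - 1) * (2 * n - 1) / 6 - n * m * (n - m) / 2 := by
  have hsplit := sum_range_add_sum_Ico (fun j => (j : K) * ((j + m) % n : ℕ)) (Nat.sub_le n m)
  have hlow : ∀ j ∈ range (n - m), (j : K) * ((j + m) % n : ℕ) = j ^ 2 + m * j := by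
    intro j hj
    rw [Nat.mod_eq_of_lt (by grind)]
    push_cast; ring
  have hhigh : ∀ j ∈ Ico (n - m) n, (j : K) * ((j + m) % n : ℕ) = j ^ 2 + m * j - n * j := by
    intro j hj
    have hj := mem_Ico.mp hj
    rw [Nat.mod_eq_sub_mod (by omega), Nat.mod_eq_of_lt (by omega), Nat.cast_sub (by omega)]
    push_cast; ring
  rw [← hsplit, sum_congr rfl hlow, sum_congr rfl hhigh, sum_Ico_eq_sub _ (Nat.sub_le n m)]
  simp only [sum_add_distrib, sum_sub_distrib, ← mul_sum, sum_range_natCast, sum_range_natCast_sq,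
    Nat.cast_sub hm]
  ring

end Sums

theorem sub_one_mul_sum_range_natCast_mul_pow {R : Type*} [CommRing R] (x : R) (n : ℕ) :
    (x - 1) * ∑ j ∈ range n, (j : R) * x ^ j = ((n : R) - 1) * x ^ n - ∑ j ∈ range n, x ^ j + 1 := by
  induction n with
  | zero => simp
  | succ n ih =>
    rw [sum_range_succ, sum_range_succ (fun j => x ^ j), mul_add, ih]
    push_cast; ring

theorem inv_one_sub_eq_of_pow_eq_one {K : Type*} [Field K] {x : K} {n : ℕ} (hx : x ≠ 1)
    (hxn : x ^ n = 1) (hn : (n : K) ≠ 0) :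
    (1 - x)⁻¹ = -(∑ j ∈ range n, (j : K) * x ^ j) / n := by
  have hgeom : ∑ j ∈ range n, x ^ j = 0 := by rw [geom_sum_eq hx, hxn, sub_self, zero_div]
  have h := sub_one_mul_sum_range_natCast_mul_pow x n
  rw [hxn, hgeom] at h
  have hx' : 1 - x ≠ 0 := sub_ne_zero.mpr hx.symm
  field_simp
  linear_combination -h

theorem pow_div_one_sub_mul_one_sub_eq_sum {K : Type*} [Field K] {ζ : K} {r a c i k : ℕ}
    (hζ : ζ ^ r = 1) (ha : ζ ^ (k * a) ≠ 1) (hc : ζ ^ (k * c) ≠ 1) (hr : (r : K) ≠ 0) :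
    ζ ^ (k * i) / ((1 - ζ ^ (k * a)) * (1 - ζ ^ (k * c)))
      = ∑ j ∈ range r, ∑ l ∈ range r, (j * l : K) * (ζ ^ (i + a * j + c * l)) ^ k / r ^ 2 := by
  have hpow : ∀ n, (ζ ^ n) ^ r = 1 := fun n => by rw [← pow_mul, mul_comm, pow_mul, hζ, one_pow]
  have hexpand : ∑ j ∈ range r, ∑ l ∈ range r, (j * l : K) * (ζ ^ (i + a * j + c * l)) ^ k / r ^ 2
      = ζ ^ (k * i) * ((∑ j ∈ range r, (j : K) * (ζ ^ (k * a)) ^ j)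
        * ∑ l ∈ range r, (l : K) * (ζ ^ (k * c)) ^ l) / r ^ 2 := by
    rw [sum_mul_sum, mul_sum, sum_div]
    refine sum_congr rfl fun j _ => ?_
    rw [mul_sum, sum_div]
    refine sum_congr rfl fun l _ => ?_
    ring
  rw [div_eq_mul_inv, mul_inv, inv_one_sub_eq_of_pow_eq_one ha (hpow _) hr,
    inv_one_sub_eq_of_pow_eq_one hc (hpow _) hr, hexpand]
  ring

theorem Nat.dvd_add_mul_add_sub_mul_iff {r a b : ℕ} (ha : a ≤ r) (hab : a * b ≡ 1 [MOD r])
    (i j : ℕ) {l : ℕ} (hl : l < r) : r ∣ i + a * j + (r - a) * l ↔ l = (j + b * i) % r := by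
  have habZ : (a : ZMod r) * b = 1 := by exact_mod_cast (ZMod.natCast_eq_natCast_iff _ _ _).mpr hab
  rw [← ZMod.natCast_eq_zero_iff, ← Nat.mod_eq_of_lt hl, ← ZMod.natCast_eq_natCast_iff',
    Nat.mod_eq_of_lt hl]
  push_cast [Nat.cast_sub ha, ZMod.natCast_self]
  constructor <;> intro h
  · linear_combination (-(b : ZMod r)) * h + ((j : ZMod r) - l) * habZ
  · linear_combination (-(a : ZMod r)) * h - (i : ZMod r) * habZ

theorem sum_range_mul_ite_dvd_sub_one {K : Type*} [Field K] [CharZero K] {r a b : ℕ} (ha : a ≤ r)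
    (hr : r ≠ 0) (hab : a * b ≡ 1 [MOD r]) (i j : ℕ) :
    ∑ l ∈ range r, (j * l : K) * ((if r ∣ i + a * j + (r - a) * l then (r : K) else 0) - 1)
      = j * (r * ((j + b * i) % r : ℕ) - r * (r - 1) / 2) := by
  have hindicator : ∀ l ∈ range r,
      (j * l : K) * ((if r ∣ i + a * j + (r - a) * l then (r : K) else 0) - 1)
        = (if l = (j + b * i) % r then (j * l * r : K) else 0) - j * l := by
    intro l hl
    rw [if_congr (Nat.dvd_add_mul_add_sub_mul_iff ha hab i j (mem_range.mp hl)) rfl rfl]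
    split_ifs <;> ring
  rw [sum_congr rfl hindicator, sum_sub_distrib, sum_ite_eq',
    if_pos (mem_range.mpr (Nat.mod_lt _ (Nat.pos_of_ne_zero hr))), ← mul_sum, sum_range_natCast]
  ring

namespace IsPrimitiveRoot

variable {K : Type*} [Field K] {ζ : K} {r a b : ℕ}

theorem sum_Ico_one_pow_pow (hζ : IsPrimitiveRoot ζ r) (hr : r ≠ 0) (N : ℕ) :
    ∑ k ∈ Ico 1 r, (ζ ^ N) ^ k = (if r ∣ N then (r : K) else 0) - 1 := by
  have hrange : ∑ k ∈ range r, (ζ ^ N) ^ k = if r ∣ N then (r : K) else 0 := by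
    split_ifs with h
    · simp [(hζ.pow_eq_one_iff_dvd N).mpr h]
    · rw [geom_sum_eq (mt (hζ.pow_eq_one_iff_dvd N).mp h), ← pow_mul, mul_comm, pow_mul,
        hζ.pow_eq_one, one_pow, sub_self, zero_div]
  rw [← hrange, range_eq_Ico, sum_eq_sum_Ico_succ_bot (Nat.pos_of_ne_zero hr), pow_zero]
  ring

theorem pow_mul_ne_one_of_modEq (hζ : IsPrimitiveRoot ζ r) (hab : a * b ≡ 1 [MOD r]) {k : ℕ}
    (hk0 : k ≠ 0) (hkr : k < r) : ζ ^ (k * a) ≠ 1 := by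
  intro h
  have hk : k * 1 ≡ 0 [MOD r] := calc
    k * 1 ≡ k * (a * b) [MOD r] := (hab.mul_left k).symm
    _ = k * a * b := (mul_assoc k a b).symm
    _ ≡ 0 [MOD r] := Nat.modEq_zero_iff_dvd.mpr (dvd_mul_of_dvd_left ((hζ.pow_eq_one_iff_dvd _).mp h) b)
  rw [mul_one] at hk
  exact hk0 (Nat.eq_zero_of_dvd_of_lt (Nat.modEq_zero_iff_dvd.mp hk) hkr)

theorem sum_Ico_pow_div_one_sub_mul_one_sub [CharZero K] (hζ : IsPrimitiveRoot ζ r) (har : a < r)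
    (hab : a * b ≡ 1 [MOD r]) (i : ℕ) :
    ∑ k ∈ Ico 1 r, ζ ^ (k * i) / ((1 - ζ ^ (k * a)) * (1 - ζ ^ (k * (r - a))))
      = ((r : K) ^ 2 - 1) / 12 - ((b * i) % r : ℕ) * ((r : K) - ((b * i) % r : ℕ)) / 2 := by
  have hr : r ≠ 0 := by omega
  have hrK : (r : K) ≠ 0 := Nat.cast_ne_zero.mpr hr
  have hterm : ∀ k ∈ Ico 1 r, ζ ^ (k * i) / ((1 - ζ ^ (k * a)) * (1 - ζ ^ (k * (r - a))))
      = ∑ j ∈ range r, ∑ l ∈ range r, (j * l : K) * (ζ ^ (i + a * j + (r - a) * l)) ^ k / r ^ 2 := by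
    intro k hk
    obtain ⟨hk1, hkr⟩ := mem_Ico.mp hk
    have hka : ζ ^ (k * a) ≠ 1 := hζ.pow_mul_ne_one_of_modEq hab (by omega) hkr
    have hkc : ζ ^ (k * (r - a)) ≠ 1 := by
      have hprod : ζ ^ (k * a) * ζ ^ (k * (r - a)) = 1 := by
        rw [← pow_add, ← mul_add, Nat.add_sub_cancel' har.le, mul_comm, pow_mul, hζ.pow_eq_one,
          one_pow]
      exact fun h => hka (by rwa [h, mul_one] at hprod)
    exact pow_div_one_sub_mul_one_sub_eq_sum hζ.pow_eq_one hka hkc hrK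
  set m := b * i % r
  have hmr : m ≤ r := (Nat.mod_lt _ (Nat.pos_of_ne_zero hr)).le
  have hmod : ∀ j, (j + b * i) % r = (j + m) % r := fun j => (Nat.add_mod_mod j (b * i) r).symm
  calc ∑ k ∈ Ico 1 r, ζ ^ (k * i) / ((1 - ζ ^ (k * a)) * (1 - ζ ^ (k * (r - a))))
      = ∑ k ∈ Ico 1 r, ∑ j ∈ range r, ∑ l ∈ range r,
          (j * l : K) * (ζ ^ (i + a * j + (r - a) * l)) ^ k / r ^ 2 := sum_congr rfl hterm
    _ = ∑ j ∈ range r, ∑ l ∈ range r,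
          (j * l : K) * ((if r ∣ i + a * j + (r - a) * l then (r : K) else 0) - 1) / r ^ 2 := by
      rw [sum_comm]
      refine sum_congr rfl fun j _ => ?_
      rw [sum_comm]
      refine sum_congr rfl fun l _ => ?_
      rw [← sum_div, ← mul_sum, hζ.sum_Ico_one_pow_pow hr]
    _ = (∑ j ∈ range r, (j : K) * (r * ((j + m) % r : ℕ) - r * (r - 1) / 2)) / r ^ 2 := by
      rw [sum_div]
      refine sum_congr rfl fun j _ => ?_
      rw [← sum_div, sum_range_mul_ite_dvd_sub_one har.le hr hab, hmod]
    _ = ((r : K) ^ 2 - 1) / 12 - (m : K) * (r - m) / 2 := by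
      simp only [mul_sub, sum_sub_distrib, mul_left_comm _ (r : K), ← mul_sum, ← sum_mul,
        sum_range_natCast_mul_add_mod hmr, sum_range_natCast]
      field_simp
      ring

end IsPrimitiveRoot

open Finset in
theorem dedekind_sums_surface_type_general (r a b : ℕ)
    (har : a < r) (hab : a * b ≡ 1 [MOD r])
    (ζ : ℂ) (hζ : ζ = Complex.exp (2 * Real.pi * Complex.I / r))
    (σ : ℕ → ℂ)
    (hσ : ∀ i, σ i = (1 / (r : ℂ)) *
      ∑ k ∈ Finset.Ico 1 r,
        ζ ^ (k * i) / ((1 - ζ ^ (k * a)) * (1 - ζ ^ (k * (r - a))))) :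
    ∀ i : ℕ, σ i = ((r : ℂ) ^ 2 - 1) / (12 * r)
      - ((b * i) % r : ℕ) * ((r : ℂ) - ((b * i) % r : ℕ)) / (2 * r) := by
  intro i
  have hζr : IsPrimitiveRoot ζ r := hζ ▸ Complex.isPrimitiveRoot_exp r (by omega)
  have hr : (r : ℂ) ≠ 0 := Nat.cast_ne_zero.mpr (by omega)
  rw [hσ i, hζr.sum_Ico_pow_div_one_sub_mul_one_sub har hab i]
  field_simp

open Finset in
/-- For a surface orbifold point of type `(1/r)(a, r−a)` with `gcd(a,r)=1` and
`b = a⁻¹ mod r`, the Dedekind sums are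
`σᵢ = (r²−1)/(12r) − b̄ᵢ(r−b̄ᵢ)/(2r)`, where `b̄ᵢ = (b·i) mod r`. -/
theorem dedekind_sums_surface_type (r a b : ℕ) (hr : 2 ≤ r)
    (ha0 : 0 < a) (har : a < r) (hcop : Nat.Coprime a r)
    (hb0 : 0 < b) (hbr : b < r) (hab : a * b ≡ 1 [MOD r])
    (ζ : ℂ) (hζ : ζ = Complex.exp (2 * Real.pi * Complex.I / r))
    (σ : ℕ → ℂ)
    (hσ : ∀ i, σ i = (1 / (r : ℂ)) *
      ∑ k ∈ Finset.Ico 1 r,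
        ζ ^ (k * i) / ((1 - ζ ^ (k * a)) * (1 - ζ ^ (k * (r - a))))) :
    ∀ i : ℕ, σ i = ((r : ℂ) ^ 2 - 1) / (12 * r)
      - ((b * i) % r : ℕ) * ((r : ℂ) - ((b * i) % r : ℕ)) / (2 * r) :=
  dedekind_sums_surface_type_general r a b har hab ζ hζ σ hσ
end
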